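/- arXiv:1509.06849 — 5 statements merged into one kernel-verified Lean document; each statement's English description precedes it below -/
import Mathlib

section
/- Let A be an invertible m×m matrix with entries in {0,1} such that every row of A has at most two non-zero entries. Then every entry of A⁻¹ belongs to {0, 1, -1, 1/2, -1/2}. -/
/-!
Solve `A x = e_j`. If some column `c` has a single nonzero entry, in row `r`, then deleting row
`r` and column `c` leaves a matrix of the same kind, solved by the remaining coordinates of `x`
with right-hand side `e_j` or `0`, while `x c` is `δ_rj` minus at most one other coordinate;
induct on the size. Otherwise every column has at least two ones, so by double counting every row
and column has exactly two and `A *ᵥ y = y ∘ p + y ∘ q` for permutations `p, q`. The system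
becomes `y a + y (τ a) = δ_ab` with `τ = q p⁻¹`, and going once around a cycle of `τ` of length
`L` gives `(1 - (-1) ^ L) y a ∈ {0, 1, -1}`. An even cycle carries an alternating kernel vector,
so all cycles are odd and `y a ∈ {0, 1/2, -1/2}`.
-/

open Finset Function Matrix Equiv

theorem alternating_sum_telescope {R : Type*} [CommRing R] {g d : ℕ → R}
    (h : ∀ t, g (t + 1) + g t = d t) (L : ℕ) :
    g 0 = (-1) ^ L * g L + ∑ t ∈ range L, (-1) ^ t * d t := by
  induction L with
  | zero => simp
  | succ L ih => rw [sum_range_succ, ← h L]; linear_combination ih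

theorem sum_range_neg_one_pow_mul_succ_of_even {R : Type*} [CommRing R] {f : ℕ → R} {L : ℕ}
    (hL : Even L) (hf : f L = f 0) :
    ∑ t ∈ range L, (-1) ^ t * f (t + 1) = -∑ t ∈ range L, (-1) ^ t * f t := by
  have h₁ := sum_range_succ (fun t => (-1 : R) ^ t * f t) L
  have h₂ := sum_range_succ' (fun t => (-1 : R) ^ t * f t) L
  simp only [pow_succ, hL.neg_one_pow, hf, mul_neg_one, neg_mul, sum_neg_distrib] at h₁ h₂
  linear_combination h₂ - h₁

theorem sum_range_neg_one_pow_mul_ite_mem {R α : Type*} [Ring R] [DecidableEq α] {u : ℕ → α}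
    {L : ℕ} (hu : Set.InjOn u (Set.Iio L)) (b : α) :
    ∑ t ∈ range L, (-1 : R) ^ t * (if u t = b then 1 else 0) ∈ ({0, 1, -1} : Set R) := by
  by_cases h : ∃ t < L, u t = b
  · obtain ⟨t, ht, rfl⟩ := h
    rw [sum_eq_single t]
    · exact Or.inr (by simpa using neg_one_pow_eq_or R t)
    · intro s hs hst
      rw [if_neg fun h => hst (hu (mem_range.1 hs) ht h), mul_zero]
    · exact fun h => absurd (mem_range.2 ht) h
  · push Not at h
    exact Or.inl (sum_eq_zero fun t ht => by simp [h t (mem_range.1 ht)])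

section Cycles

variable {α K : Type*} [DecidableEq α]

theorem mem_of_add_apply_eq_single [Field K] [NeZero (2 : K)] (f : α → α) {x : α → K} {b : α}
    (hx : ∀ a, x a + x (f a) = (Pi.single b 1 : α → K) a) {a : α} (ha : Odd (minimalPeriod f a)) :
    x a ∈ ({0, 1 / 2, -1 / 2} : Set K) := by
  have key := alternating_sum_telescope (g := fun t => x (f^[t] a))
    (d := fun t => (Pi.single b 1 : α → K) (f^[t] a))
    (fun t => by rw [iterate_succ_apply', add_comm]; exact hx _) (minimalPeriod f a)
  simp only [iterate_minimalPeriod, ha.neg_one_pow, iterate_zero, id, Pi.single_apply] at key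
  have hsum := sum_range_neg_one_pow_mul_ite_mem (R := K)
    (iterate_injOn_Iio_minimalPeriod (f := f) (x := a)) b
  have h2 : (2 : K) ≠ 0 := NeZero.ne 2
  generalize (∑ t ∈ _, _ : K) = s at key hsum
  rw [show x a = s / 2 by rw [eq_div_iff h2]; linear_combination key]
  rcases hsum with rfl | rfl | rfl <;> simp [neg_div]

theorem exists_ne_zero_add_apply_eq_zero [Finite α] [CommRing K] [Nontrivial K] (τ : Perm α)
    {a : α} (ha : Even (minimalPeriod τ a)) :
    ∃ z : α → K, z ≠ 0 ∧ ∀ k, z k + z (τ k) = 0 := by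
  have hpos : 0 < minimalPeriod τ a :=
    minimalPeriod_pos_of_mem_periodicPts (τ.injective.mem_periodicPts a)
  refine ⟨fun k => ∑ t ∈ range (minimalPeriod τ a), (-1) ^ t * (if τ^[t] a = k then 1 else 0),
    Function.ne_iff.2 ⟨a, ?_⟩, fun k => ?_⟩
  · rw [sum_eq_single 0]
    · simp
    · intro t ht ht0
      rw [if_neg, mul_zero]
      exact fun h => ht0 (iterate_injOn_Iio_minimalPeriod (mem_range.1 ht) hpos h)
    · simp [hpos]
  · have := sum_range_neg_one_pow_mul_succ_of_even ha
      (f := fun t => if τ^[t] a = τ k then (1 : K) else 0) (by rw [iterate_minimalPeriod]; rfl)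
    simp only [iterate_succ_apply', τ.injective.eq_iff] at this
    beta_reduce
    rw [this, neg_add_cancel]

end Cycles

section Regular

variable {n R : Type*} [Fintype n]

theorem Matrix.exists_perm_forall_ne_zero_of_det_ne_zero [DecidableEq n] [CommRing R]
    {A : Matrix n n R} (h : A.det ≠ 0) : ∃ p : Perm n, ∀ i, A i (p i) ≠ 0 := by
  contrapose! h
  rw [det_apply]
  refine sum_eq_zero fun σ _ => ?_
  obtain ⟨i, hi⟩ := h σ⁻¹
  rw [prod_eq_zero (mem_univ (σ⁻¹ i)) (by simpa using hi), smul_zero]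

theorem card_filter_ne_zero_eq_two_of_le_two_of_two_le [Zero R] [DecidableEq R]
    (A : Matrix n n R) (hrow : ∀ i, #{j | A i j ≠ 0} ≤ 2) (hcol : ∀ j, 2 ≤ #{i | A i j ≠ 0}) :
    (∀ i, #{j | A i j ≠ 0} = 2) ∧ ∀ j, #{i | A i j ≠ 0} = 2 := by
  have hswap : ∑ i, #{j | A i j ≠ 0} = ∑ j, #{i | A i j ≠ 0} := by
    simp_rw [card_filter]; exact sum_comm
  have hle : ∑ i, #{j | A i j ≠ 0} ≤ ∑ _i : n, 2 := sum_le_sum fun i _ => hrow i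
  have hge : ∑ _j : n, 2 ≤ ∑ j, #{i | A i j ≠ 0} := sum_le_sum fun j _ => hcol j
  refine ⟨fun i => ?_, fun j => ?_⟩
  · exact (sum_eq_sum_iff_of_le fun i _ => hrow i).1 (by omega) i (mem_univ i)
  · exact ((sum_eq_sum_iff_of_le fun j _ => hcol j).1 (by omega) j (mem_univ j)).symm

theorem exists_perm_mulVec_apply_eq_add [DecidableEq n] [CommRing R] [DecidableEq R]
    (A : Matrix n n R) (h01 : ∀ i j, A i j = 0 ∨ A i j = 1) (hdet : A.det ≠ 0)
    (hrow : ∀ i, #{j | A i j ≠ 0} = 2) (hcol : ∀ j, #{i | A i j ≠ 0} = 2) :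
    ∃ p q : Perm n, ∀ v i, (A *ᵥ v) i = v (p i) + v (q i) := by
  obtain ⟨p, hp⟩ := exists_perm_forall_ne_zero_of_det_ne_zero hdet
  have hone : ∀ i, #(({j | A i j ≠ 0} : Finset n).erase (p i)) = 1 := fun i => by
    rw [card_erase_of_mem (by simpa using hp i), hrow]
  choose q hq using fun i => card_eq_one.1 (hone i)
  have hmem : ∀ i k, k ≠ p i ∧ A i k ≠ 0 ↔ k = q i := fun i k => by
    simpa using congrArg (k ∈ ·) (hq i)
  have hqp : ∀ i, q i ≠ p i := fun i => ((hmem i (q i)).2 rfl).1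
  have hq_inj : Injective q := by
    intro i₁ i₂ h
    by_contra hne
    -- otherwise column `q i₁` holds the ones of the three rows `i₁`, `i₂` and `p⁻¹ (q i₁)`
    have : 2 < #{i | A i (q i₁) ≠ 0} := two_lt_card_iff.2
      ⟨i₁, i₂, p⁻¹ (q i₁), by simpa using ((hmem _ _).2 rfl).2,
        by simpa [h] using ((hmem _ _).2 rfl).2, by simpa using hp (p⁻¹ (q i₁)), hne,
        fun h' => hqp i₁ (Perm.eq_inv_iff_eq.1 h').symm,
        fun h' => hqp i₂ ((Perm.eq_inv_iff_eq.1 h').trans h).symm⟩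
    exact this.ne' (hcol _)
  refine ⟨p, Equiv.ofBijective q (Finite.injective_iff_bijective.1 hq_inj), fun v i => ?_⟩
  have hsupp : ∀ k ∉ ({p i, q i} : Finset n), A i k * v k = 0 := fun k hk => by
    simp only [mem_insert, mem_singleton, not_or] at hk
    rw [not_not.1 fun h => hk.2 ((hmem i k).1 ⟨hk.1, h⟩), zero_mul]
  rw [mulVec, dotProduct, ← sum_subset (subset_univ _) fun k _ => hsupp k, sum_pair (hqp i).symm,
    (h01 i _).resolve_left (hp i), (h01 i _).resolve_left ((hmem i _).2 rfl).2, one_mul, one_mul]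
  rfl

theorem mem_of_mulVec_eq_single_of_perm_add [DecidableEq n] {K : Type*} [Field K]
    [NeZero (2 : K)] {A : Matrix n n K} (hdet : A.det ≠ 0) {p q : Perm n}
    (hA : ∀ v i, (A *ᵥ v) i = v (p i) + v (q i)) {x : n → K} {j : n}
    (hx : A *ᵥ x = Pi.single j 1) (i : n) : x i ∈ ({0, 1 / 2, -1 / 2} : Set K) := by
  set τ := q * p⁻¹
  have hτ : ∀ v a, (A *ᵥ v) (p⁻¹ a) = v a + v (τ a) := fun v a => by simp [τ, hA]
  have hodd : ∀ a, Odd (minimalPeriod τ a) := fun a => by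
    by_contra heven
    obtain ⟨z, hz, hτz⟩ :=
      exists_ne_zero_add_apply_eq_zero (K := K) τ (Nat.not_odd_iff_even.1 heven)
    exact hz (eq_zero_of_mulVec_eq_zero hdet (funext fun i => by simpa [hτz] using hτ z (p i)))
  refine mem_of_add_apply_eq_single τ (b := p j) (fun a => ?_) (hodd i)
  rw [← hτ, hx]
  simp [Pi.single_apply, Equiv.symm_apply_eq]

end Regular

theorem Fin.card_filter_univ_succAbove {n : ℕ} (c : Fin (n + 1)) (P : Fin (n + 1) → Prop)
    [DecidablePred P] : #{k | P k} = (if P c then 1 else 0) + #{k | P (c.succAbove k)} := by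
  rw [Fin.univ_succAbove n c, filter_cons, apply_ite card, card_cons, filter_map, card_map]
  split_ifs <;> simp [add_comm] <;> rfl

theorem Matrix.det_eq_of_forall_ne_eq_zero {R : Type*} [CommRing R] {n : ℕ}
    (A : Matrix (Fin (n + 1)) (Fin (n + 1)) R) {r c : Fin (n + 1)} (hc : ∀ i ≠ r, A i c = 0) :
    A.det = (-1) ^ (r.val + c.val) * A r c * (A.submatrix r.succAbove c.succAbove).det := by
  rw [det_succ_column A c, sum_eq_single r (fun i _ hi => by rw [hc i hi, mul_zero, zero_mul])
    (fun h => absurd (mem_univ r) h)]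

theorem sum_mul_mem_of_card_le_one {ι R : Type*} [Fintype ι] [Semiring R] [DecidableEq R]
    {s : Set R} (hs : 0 ∈ s) {w y : ι → R} (hw : ∀ k, w k = 0 ∨ w k = 1)
    (hcard : #{k | w k ≠ 0} ≤ 1) (hy : ∀ k, y k ∈ s) : ∑ k, w k * y k ∈ s := by
  rcases Nat.le_one_iff_eq_zero_or_eq_one.1 hcard with h | h
  · rw [card_eq_zero, filter_eq_empty_iff] at h
    rw [sum_eq_zero fun k _ => by rw [not_not.1 (h (mem_univ k)), zero_mul]]
    exact hs
  · obtain ⟨k₀, hk₀⟩ := card_eq_one.1 h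
    have hw0 : ∀ k, w k ≠ 0 ↔ k = k₀ := fun k => by simpa using congrArg (k ∈ ·) hk₀
    rw [sum_eq_single k₀ (fun k _ hk => by rw [not_not.1 fun h => hk ((hw0 k).1 h), zero_mul])
      (fun h => absurd (mem_univ k₀) h), (hw k₀).resolve_left ((hw0 k₀).2 rfl), one_mul]
    exact hy k₀

theorem neg_mem_halves {K : Type*} [Field K] {s : K}
    (hs : s ∈ ({0, 1, -1, 1 / 2, -1 / 2} : Set K)) :
    -s ∈ ({0, 1, -1, 1 / 2, -1 / 2} : Set K) := by
  rcases hs with rfl | rfl | rfl | rfl | rfl <;> simp [neg_div]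

theorem mem_of_mulVec_eq_single_of_col_eq_zero {K : Type*} [Field K] [DecidableEq K] {n : ℕ}
    {A : Matrix (Fin (n + 1)) (Fin (n + 1)) K} (h01 : ∀ i j, A i j = 0 ∨ A i j = 1)
    (hrow : ∀ i, #{j | A i j ≠ 0} ≤ 2) (hdet : A.det ≠ 0)
    {r c : Fin (n + 1)} (hc : ∀ i ≠ r, A i c = 0)
    (ih : ∀ (x : Fin n → K) j, A.submatrix r.succAbove c.succAbove *ᵥ x = Pi.single j 1 →
      ∀ k, x k ∈ ({0, 1, -1, 1 / 2, -1 / 2} : Set K))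
    {x : Fin (n + 1) → K} {j : Fin (n + 1)} (hx : A *ᵥ x = Pi.single j 1) (i : Fin (n + 1)) :
    x i ∈ ({0, 1, -1, 1 / 2, -1 / 2} : Set K) := by
  set A' := A.submatrix r.succAbove c.succAbove
  set x' := x ∘ c.succAbove
  rw [det_eq_of_forall_ne_eq_zero A hc] at hdet
  obtain ⟨hrc, hdet'⟩ := ne_zero_and_ne_zero_of_mul hdet
  have hArc : A r c = 1 := (h01 r c).resolve_left (ne_zero_and_ne_zero_of_mul hrc).2
  have hsplit : ∀ i, (A *ᵥ x) i = A i c * x c + ∑ k, A i (c.succAbove k) * x' k :=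
    fun i => Fin.sum_univ_succAbove _ c
  have hx' : A' *ᵥ x' = Pi.single j 1 ∘ r.succAbove := funext fun i => by
    have := hsplit (r.succAbove i)
    rw [hc _ (Fin.succAbove_ne r i), zero_mul, zero_add, hx] at this
    exact this.symm
  have hxc : x c = (Pi.single j 1 : Fin (n + 1) → K) r - ∑ k, A r (c.succAbove k) * x' k := by
    have := hsplit r
    rw [hArc, one_mul, hx] at this
    linear_combination -this
  rcases eq_or_ne j r with rfl | hjr
  · have hx'0 : x' = 0 := eq_zero_of_mulVec_eq_zero hdet' <| by
      rw [hx']; ext k; simp [Fin.succAbove_ne]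
    refine Fin.succAboveCases c ?_ (fun k => ?_) i
    · simp [hxc, hx'0]
    · simp [show x (c.succAbove k) = x' k from rfl, hx'0]
  · obtain ⟨j, rfl⟩ := Fin.exists_succAbove_eq hjr
    have hx'S := ih x' j <| by rw [hx']; ext k; simp [Pi.single_apply]
    have hcard : #{k | A r (c.succAbove k) ≠ 0} ≤ 1 := by
      have := (Fin.card_filter_univ_succAbove c (fun k => A r k ≠ 0)).symm.trans_le (hrow r)
      rw [if_pos (hArc ▸ one_ne_zero)] at this
      omega
    have hsum := sum_mul_mem_of_card_le_one (by simp) (fun k => h01 _ _) hcard hx'S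
    refine Fin.succAboveCases c ?_ hx'S i
    rw [hxc, Pi.single_eq_of_ne (Fin.succAbove_ne r j).symm, zero_sub]
    exact neg_mem_halves hsum

theorem mem_of_mulVec_eq_single {K : Type*} [Field K] [DecidableEq K] [NeZero (2 : K)] {m : ℕ}
    {A : Matrix (Fin m) (Fin m) K} (h01 : ∀ i j, A i j = 0 ∨ A i j = 1)
    (hrow : ∀ i, #{j | A i j ≠ 0} ≤ 2) (hdet : A.det ≠ 0) {x : Fin m → K} {j : Fin m}
    (hx : A *ᵥ x = Pi.single j 1) (i : Fin m) : x i ∈ ({0, 1, -1, 1 / 2, -1 / 2} : Set K) := by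
  induction m with
  | zero => exact i.elim0
  | succ n ih =>
    by_cases hleaf : ∃ c, #{r | A r c ≠ 0} ≤ 1
    · obtain ⟨c, hc⟩ := hleaf
      obtain ⟨r, hr⟩ := card_le_one_iff_subset_singleton.1 hc
      have hcr : ∀ i ≠ r, A i c = 0 := fun i hi => by
        by_contra h
        exact hi (mem_singleton.1 (hr (by simpa using h)))
      have hdet' := (ne_zero_and_ne_zero_of_mul (det_eq_of_forall_ne_eq_zero A hcr ▸ hdet)).2
      have hrow' : ∀ i, #{k | A (r.succAbove i) (c.succAbove k) ≠ 0} ≤ 2 := fun i =>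
        le_add_self.trans ((Fin.card_filter_univ_succAbove c _).symm.trans_le (hrow _))
      exact mem_of_mulVec_eq_single_of_col_eq_zero h01 hrow hdet hcr
        (fun _ _ => ih (fun _ _ => h01 _ _) hrow' hdet') hx i
    · push Not at hleaf
      obtain ⟨hrow₂, hcol₂⟩ := card_filter_ne_zero_eq_two_of_le_two_of_two_le A hrow hleaf
      obtain ⟨p, q, hA⟩ := exists_perm_mulVec_apply_eq_add A h01 hdet hrow₂ hcol₂
      rcases mem_of_mulVec_eq_single_of_perm_add hdet hA hx i with h | h | h <;> simp [h]

theorem stmt_0 (m : ℕ) (A : Matrix (Fin m) (Fin m) ℚ)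
    (h01 : ∀ i j, A i j = 0 ∨ A i j = 1)
    (hrow : ∀ i, (Finset.univ.filter fun j => A i j ≠ 0).card ≤ 2)
    (hA : IsUnit A.det) :
    ∀ i j, A⁻¹ i j ∈ ({0, 1, -1, 1/2, -1/2} : Set ℚ) := by
  intro i j
  have hx : A *ᵥ (A⁻¹ *ᵥ Pi.single j 1) = Pi.single j 1 := by
    rw [mulVec_mulVec, mul_nonsing_inv A hA, one_mulVec]
  simpa using mem_of_mulVec_eq_single h01 hrow hA.ne_zero hx i
end

section
/- Consider the graph G=(V,E) on V={1,...,m} built from an invertible 0-1 matrix A whose every row has exactly two non-zero entries, where each row {j,k} with A_{ij}=A_{ik}=1 gives an edge (j,k). Then G contains no even cycle. -/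
/-!
Walk around an even cycle `v₀ v₁ … v_{n-1} v₀`. The edge `{v_t, v_{t+1}}` comes from a row
of `A` which, having exactly two non-zero entries, equals `e_{v_t} + e_{v_{t+1}}`; distinct
edges come from distinct rows. The alternating sum of these `n` rows telescopes to
`e_{v₀} - e_{v_n} = 0` because `n` is even, so the rows of `A` are linearly dependent and `A`
is singular.
-/

open Finset SimpleGraph

variable {ι : Type*} [DecidableEq ι]

lemma eq_single_add_single_of_card_filter_ne_zero {R : Type*} [AddZeroClass R] [DecidableEq R]
    [Fintype ι] {r : ι → R} {j k : ι} (hjk : j ≠ k) (hj : r j ≠ 0) (hk : r k ≠ 0)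
    (hcard : #{l | r l ≠ 0} = 2) :
    r = Pi.single j (r j) + Pi.single k (r k) := by
  have hsupp : ({l | r l ≠ 0} : Finset ι) = {j, k} :=
    (eq_of_subset_of_card_le (by simp [insert_subset_iff, hj, hk])
      (by rw [hcard, card_pair hjk])).symm
  funext l
  by_cases hlj : l = j
  · subst hlj; simp [hjk]
  by_cases hlk : l = k
  · subst hlk; simp [Ne.symm hjk]
  have hl : l ∉ ({l | r l ≠ 0} : Finset ι) := by simp [hsupp, hlj, hlk]
  simpa [hlj, hlk] using hl

lemma sym2_eq_of_single_add_single_eq {R : Type*} [AddMonoidWithOne R] [NeZero (1 : R)]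
    {a b c d : ι} (hab : a ≠ b)
    (h : (Pi.single a 1 + Pi.single b 1 : ι → R) = Pi.single c 1 + Pi.single d 1) :
    s(a, b) = s(c, d) := by
  have hmem : ∀ x, x = a ∨ x = b → x ∈ s(c, d) := by
    rintro x hx
    by_contra hxcd
    have hx' := congrFun h x
    rcases hx with rfl | rfl <;> simp_all
  exact Sym2.eq_of_ne_mem hab (Sym2.mem_mk_left a b) (Sym2.mem_mk_right a b)
    (hmem a (Or.inl rfl)) (hmem b (Or.inr rfl))

lemma sum_range_neg_one_pow_smul_add_succ_eq_zero {R M : Type*} [Ring R] [AddCommGroup M]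
    [Module R M] {f : ℕ → M} {n : ℕ} (hn : Even n) (hf : f n = f 0) :
    ∑ t ∈ range n, (-1 : R) ^ t • (f t + f (t + 1)) = 0 := by
  have hstep : ∀ t, (-1 : R) ^ t • (f t + f (t + 1)) =
      (-1 : R) ^ t • f t - (-1 : R) ^ (t + 1) • f (t + 1) := by
    intro t
    rw [pow_succ, mul_neg_one, neg_smul, sub_neg_eq_add, smul_add]
  simp only [hstep, sum_range_sub', pow_zero, one_smul, hn.neg_one_pow, hf, sub_self]

lemma SimpleGraph.Walk.IsTrail.injective_edge_getVert {V : Type*} {G : SimpleGraph V} {u v : V}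
    {p : G.Walk u v} (hp : p.IsTrail) :
    Function.Injective fun t : Fin p.length => s(p.getVert t, p.getVert (t + 1)) := by
  intro t s hts
  simp only at hts
  have ht : (t : ℕ) < p.edges.length := by simp
  have hs : (s : ℕ) < p.edges.length := by simp
  rw [← p.getElem_edges ht, ← p.getElem_edges hs] at hts
  exact Fin.ext ((hp.edges_nodup.getElem_inj_iff).1 hts)

theorem stmt_2_general (m : ℕ) (A : Matrix (Fin m) (Fin m) ℚ)
    (hrow : ∀ i, (Finset.univ.filter fun j => A i j ≠ 0).card = 2)
    (hA : IsUnit A.det)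
    (G : SimpleGraph (Fin m))
    (hG : ∀ j k, G.Adj j k ↔ j ≠ k ∧ ∃ i, A i j = 1 ∧ A i k = 1) :
    ∀ (v : Fin m) (p : G.Walk v v), p.IsCycle → Odd p.length := by
  intro v p hp
  by_contra hnot_odd
  set x : ℕ → Fin m → ℚ := fun t => Pi.single (p.getVert t) 1
  have hstep : ∀ t : Fin p.length, ∃ i, A i = x t + x (t + 1) := by
    intro t
    obtain ⟨hne, i, hj, hk⟩ := (hG _ _).1 (p.adj_getVert_succ t.2)
    refine ⟨i, ?_⟩
    rw [eq_single_add_single_of_card_filter_ne_zero hne (by simp [hj]) (by simp [hk]) (hrow i),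
      hj, hk]
  choose r hr using hstep
  have hr_inj : Function.Injective r := fun t s hts =>
    hp.isTrail.injective_edge_getVert <| sym2_eq_of_single_add_single_eq
      (p.adj_getVert_succ t.2).ne (by rw [← hr, ← hr, hts])
  have hindep : LinearIndependent ℚ (fun t => A (r t)) :=
    (Matrix.linearIndependent_rows_of_isUnit ((Matrix.isUnit_iff_isUnit_det A).2 hA)).comp r hr_inj
  have hsum : ∑ t : Fin p.length, (-1 : ℚ) ^ (t : ℕ) • A (r t) = 0 := by
    simp only [hr]
    rw [Fin.sum_univ_eq_sum_range (fun t => (-1 : ℚ) ^ t • (x t + x (t + 1)))]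
    exact sum_range_neg_one_pow_smul_add_succ_eq_zero (Nat.not_odd_iff_even.1 hnot_odd)
      (by simp [x])
  have hlen : 0 < p.length := by have := hp.three_le_length; omega
  have hcoeff := Fintype.linearIndependent_iff.1 hindep _ hsum ⟨0, hlen⟩
  simp at hcoeff

theorem stmt_2 (m : ℕ) (A : Matrix (Fin m) (Fin m) ℚ)
    (h01 : ∀ i j, A i j = 0 ∨ A i j = 1)
    (hrow : ∀ i, (Finset.univ.filter fun j => A i j ≠ 0).card = 2)
    (hA : IsUnit A.det)
    (G : SimpleGraph (Fin m))
    (hG : ∀ j k, G.Adj j k ↔ j ≠ k ∧ ∃ i, A i j = 1 ∧ A i k = 1) :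
    ∀ (v : Fin m) (p : G.Walk v v), p.IsCycle → Odd p.length :=
  stmt_2_general m A hrow hA G hG
end

section
/- Every vertex (extreme point) of the polytope P = { x ∈ [0,1]^E : Σ_{e∈δ(v)} x_e = 1 for all non-blossom vertices v, and Σ_{e∈δ(v)} x_e ≥ 1 for all blossom vertices v } of a finite graph G=(V,E) with V partitioned into blossom and non-blossom vertices is half-integral, i.e., all its coordinates lie in {0, 1/2, 1}. -/
/-!
Let `x` be a vertex, `F` its set of fractional edges and `T` the set of tight vertices meeting
`F`. A direction `d` supported on `F` that keeps every tight constraint tight must vanish, since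
`x ± t d` stays in the polytope for small `t`; hence the tight constraints at `T` are injective on
`ℝ^F` and `|F| ≤ |T|`. At a tight vertex an edge of value 1 leaves no room for a fractional one,
so the fractional edges there carry the whole unit and there are at least two of them. Since an
edge has at most two ends, double counting forces exactly two fractional edges at each vertex of
`T`. Then `d = (x - 1/2) · 𝟙_F` keeps every tight constraint tight, so it vanishes and `x = 1/2`
on `F`.
-/

open Finset Filter Topology

theorem card_le_card_of_forall_eq_zero {K ι κ : Type*} [Field K] [Fintype ι]
    (F : Finset ι) (T : Finset κ) (φ : κ → (ι → K) →ₗ[K] K)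
    (h : ∀ d : ι → K, (∀ i ∉ F, d i = 0) → (∀ k ∈ T, φ k d = 0) → d = 0) :
    #F ≤ #T := by
  classical
  let L : (ι → K) →ₗ[K] (T → K) × ((Fᶜ : Finset ι) → K) :=
    (LinearMap.pi fun k : T ↦ φ k).prod (LinearMap.pi fun i : (Fᶜ : Finset ι) ↦ LinearMap.proj i.1)
  have hL : Function.Injective L := by
    rw [← LinearMap.ker_eq_bot, LinearMap.ker_eq_bot']
    intro d hd
    simp only [L, LinearMap.prod_apply, Function.prod, Prod.mk_eq_zero, funext_iff,
      LinearMap.pi_apply, LinearMap.proj_apply, Pi.zero_apply, Subtype.forall, mem_compl] at hd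
    exact h d hd.2 hd.1
  have := LinearMap.finrank_le_finrank_of_injective hL
  simp only [Module.finrank_prod, Module.finrank_fintype_fun_eq_card, Fintype.card_coe,
    card_compl] at this
  have := card_le_univ F
  omega

theorem eq_zero_of_mem_extremePoints_of_add_mem_of_sub_mem {E : Type*} [AddCommGroup E]
    [Module ℝ E] {A : Set E} {x d : E} (hx : x ∈ A.extremePoints ℝ) (hadd : x + d ∈ A)
    (hsub : x - d ∈ A) : d = 0 := by
  have hseg : x ∈ openSegment ℝ (x + d) (x - d) :=
    ⟨1/2, 1/2, by norm_num, by norm_num, by norm_num, by module⟩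
  simpa using (hx.2 hadd hsub hseg)

theorem eventually_add_mul_mem {a b : ℝ} {s : Set ℝ} (hs : IsOpen s) (ha : a ∈ s) :
    ∀ᶠ t in 𝓝 0, a + t * b ∈ s :=
  ((by fun_prop : Continuous fun t : ℝ ↦ a + t * b).tendsto' 0 a (by simp)) (hs.mem_nhds ha)

noncomputable def fractional {ι : Type*} [Fintype ι] (x : ι → ℝ) : Finset ι :=
  {i | 0 < x i ∧ x i < 1}

@[simp]
theorem mem_fractional {ι : Type*} [Fintype ι] {x : ι → ℝ} {i : ι} :
    i ∈ fractional x ↔ 0 < x i ∧ x i < 1 := by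
  simp [fractional]

theorem sum_inter_fractional_eq_one {ι : Type*} [Fintype ι] [DecidableEq ι] {s : Finset ι}
    {x : ι → ℝ} (h01 : ∀ i ∈ s, 0 ≤ x i ∧ x i ≤ 1) (hsum : ∑ i ∈ s, x i = 1)
    (hne : (s ∩ fractional x).Nonempty) : ∑ i ∈ s ∩ fractional x, x i = 1 := by
  obtain ⟨j, hj⟩ := hne
  obtain ⟨hjs, hj0, hj1⟩ : j ∈ s ∧ 0 < x j ∧ x j < 1 := by simpa using hj
  rw [← hsum]
  refine sum_subset inter_subset_left fun i his hi ↦ ?_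
  simp only [mem_inter, his, mem_fractional, true_and, not_and, not_lt] at hi
  obtain ⟨hi0, hi1⟩ := h01 i his
  by_contra hxi0
  have hxi : x i = 1 := le_antisymm hi1 (hi (lt_of_le_of_ne hi0 (Ne.symm hxi0)))
  have hij : i ≠ j := by rintro rfl; linarith
  have : x i + x j ≤ ∑ k ∈ s, x k := by
    rw [← sum_pair hij]
    exact sum_le_sum_of_subset_of_nonneg (by simp [insert_subset_iff, his, hjs])
      fun k hk _ ↦ (h01 k hk).1
  linarith

section DegreePolytope

variable {V E : Type*} [Fintype E] [DecidableEq V] (ε : E → V × V)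

def incident (v : V) : Finset E := {e | (ε e).1 = v ∨ (ε e).2 = v}

@[simp]
theorem mem_incident {v : V} {e : E} : e ∈ incident ε v ↔ (ε e).1 = v ∨ (ε e).2 = v := by
  simp [incident]

def degreePolytope (blossom : V → Prop) : Set (E → ℝ) :=
  {x | (∀ e, 0 ≤ x e ∧ x e ≤ 1) ∧ (∀ v, ¬ blossom v → ∑ e ∈ incident ε v, x e = 1) ∧
    (∀ v, blossom v → 1 ≤ ∑ e ∈ incident ε v, x e)}

variable {ε} {blossom : V → Prop} {x : E → ℝ}

theorem eventually_add_smul_mem_degreePolytope [Finite V] {d : E → ℝ}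
    (hx : x ∈ degreePolytope ε blossom) (hd : ∀ e, d e ≠ 0 → e ∈ fractional x)
    (htight : ∀ v, ∑ e ∈ incident ε v, x e = 1 → ∑ e ∈ incident ε v, d e = 0) :
    ∀ᶠ t in 𝓝 (0 : ℝ), x + t • d ∈ degreePolytope ε blossom := by
  obtain ⟨h01, hnb, hb⟩ := hx
  have hsum (t : ℝ) (v : V) : ∑ e ∈ incident ε v, (x + t • d) e =
      ∑ e ∈ incident ε v, x e + t * ∑ e ∈ incident ε v, d e := by
    simp [sum_add_distrib, mul_sum]
  have hedge (e : E) : ∀ᶠ t in 𝓝 (0 : ℝ), 0 ≤ (x + t • d) e ∧ (x + t • d) e ≤ 1 := by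
    by_cases hde : d e = 0
    · exact .of_forall fun t ↦ by simpa [hde] using h01 e
    · have hfrac : x e ∈ Set.Ioo 0 1 := mem_fractional.1 (hd e hde)
      filter_upwards [eventually_add_mul_mem (b := d e) isOpen_Ioo hfrac] with t ht
      exact ⟨ht.1.le, ht.2.le⟩
  have hvertex (v : V) : ∀ᶠ t in 𝓝 (0 : ℝ),
      (¬ blossom v → ∑ e ∈ incident ε v, (x + t • d) e = 1) ∧
      (blossom v → 1 ≤ ∑ e ∈ incident ε v, (x + t • d) e) := by
    by_cases hv : ∑ e ∈ incident ε v, x e = 1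
    · exact .of_forall fun t ↦ by simp only [hsum, htight v hv, hv]; simp
    · have hbv : blossom v := by_contra fun h ↦ hv (hnb v h)
      have hslack : 1 < ∑ e ∈ incident ε v, x e := lt_of_le_of_ne (hb v hbv) (Ne.symm hv)
      filter_upwards [eventually_add_mul_mem (b := ∑ e ∈ incident ε v, d e) isOpen_Ioi hslack]
        with t ht
      rw [hsum]
      exact ⟨absurd hbv, fun _ ↦ ht.le⟩
  filter_upwards [eventually_all.2 hedge, eventually_all.2 hvertex] with t ht hv
  exact ⟨ht, fun v ↦ (hv v).1, fun v ↦ (hv v).2⟩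

theorem eq_zero_of_mem_extremePoints_degreePolytope [Finite V] {d : E → ℝ}
    (hx : x ∈ (degreePolytope ε blossom).extremePoints ℝ) (hd : ∀ e, d e ≠ 0 → e ∈ fractional x)
    (htight : ∀ v, ∑ e ∈ incident ε v, x e = 1 → ∑ e ∈ incident ε v, d e = 0) : d = 0 := by
  have hev := eventually_add_smul_mem_degreePolytope hx.1 hd htight
  have hev' : ∀ᶠ t in 𝓝 (0 : ℝ), x - t • d ∈ degreePolytope ε blossom := by
    simpa [sub_eq_add_neg] using (continuous_neg.tendsto' (0 : ℝ) 0 neg_zero).eventually hev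
  obtain ⟨t, ⟨hadd, hsub⟩, ht⟩ :=
    ((hev.and hev').filter_mono nhdsWithin_le_nhds |>.and self_mem_nhdsWithin).exists
      (f := 𝓝[>] (0 : ℝ))
  have htd : t • d = 0 := eq_zero_of_mem_extremePoints_of_add_mem_of_sub_mem hx hadd hsub
  exact (smul_eq_zero.1 htd).resolve_left ht.ne'

theorem sum_card_incident_inter_le [DecidableEq E] (T : Finset V) (F : Finset E) :
    ∑ v ∈ T, #(incident ε v ∩ F) ≤ 2 * #F := by
  calc ∑ v ∈ T, #(incident ε v ∩ F) = ∑ e ∈ F, #{v ∈ T | e ∈ incident ε v} := by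
        simpa [bipartiteAbove, bipartiteBelow, filter_mem_eq_inter, inter_comm, -mem_incident] using
          sum_card_bipartiteAbove_eq_sum_card_bipartiteBelow (fun v e ↦ e ∈ incident ε v)
            (s := T) (t := F)
    _ ≤ ∑ _e ∈ F, 2 := sum_le_sum fun e _ ↦ by
        refine (card_le_card fun v hv ↦ ?_).trans (card_le_two (a := (ε e).1) (b := (ε e).2))
        rcases (mem_incident ε).1 (mem_filter.1 hv).2 with h | h <;> simp [h]
    _ = 2 * #F := by simp [mul_comm]

variable [Fintype V] [DecidableEq E]

variable (ε) in
noncomputable def tightFractional (x : E → ℝ) : Finset V :=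
  {v | ∑ e ∈ incident ε v, x e = 1 ∧ (incident ε v ∩ fractional x).Nonempty}

@[simp]
theorem mem_tightFractional {v : V} : v ∈ tightFractional ε x ↔
    ∑ e ∈ incident ε v, x e = 1 ∧ (incident ε v ∩ fractional x).Nonempty := by
  simp [tightFractional]

theorem card_fractional_le_card_tightFractional
    (hx : x ∈ (degreePolytope ε blossom).extremePoints ℝ) :
    #(fractional x) ≤ #(tightFractional ε x) := by
  refine card_le_card_of_forall_eq_zero _ _
    (fun v ↦ ∑ e ∈ incident ε v, (LinearMap.proj e : (E → ℝ) →ₗ[ℝ] ℝ)) fun d hdF hdT ↦ ?_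
  refine eq_zero_of_mem_extremePoints_degreePolytope hx (fun e he ↦ by_contra (he ∘ hdF e))
    fun v hv ↦ ?_
  by_cases hvT : v ∈ tightFractional ε x
  · simpa using hdT v hvT
  · exact sum_eq_zero fun e he ↦ hdF e fun heF ↦
      hvT (mem_tightFractional.2 ⟨hv, e, mem_inter.2 ⟨he, heF⟩⟩)

theorem two_le_card_incident_inter_fractional (h01 : ∀ e, 0 ≤ x e ∧ x e ≤ 1) {v : V}
    (hv : v ∈ tightFractional ε x) : 2 ≤ #(incident ε v ∩ fractional x) := by
  obtain ⟨htight, hne⟩ := mem_tightFractional.1 hv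
  have hsum := sum_inter_fractional_eq_one (fun e _ ↦ h01 e) htight hne
  by_contra! hlt
  obtain ⟨e, he⟩ : ∃ e, incident ε v ∩ fractional x = {e} :=
    card_eq_one.1 (by have := hne.card_pos; omega)
  have hfrac : e ∈ fractional x := mem_of_mem_inter_right (he ▸ mem_singleton_self e)
  rw [he, sum_singleton] at hsum
  linarith [(mem_fractional.1 hfrac).2]

theorem card_incident_inter_fractional_eq_two
    (hx : x ∈ (degreePolytope ε blossom).extremePoints ℝ) {v : V}
    (hv : v ∈ tightFractional ε x) : #(incident ε v ∩ fractional x) = 2 := by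
  set T := tightFractional ε x
  have hge (w : V) (hw : w ∈ T) := two_le_card_incident_inter_fractional hx.1.1 hw
  by_contra hne
  have : 2 * #T < 2 * #T := calc
    2 * #T = ∑ _w ∈ T, 2 := by simp [mul_comm]
    _ < ∑ w ∈ T, #(incident ε w ∩ fractional x) :=
      sum_lt_sum hge ⟨v, hv, lt_of_le_of_ne (hge v hv) (Ne.symm hne)⟩
    _ ≤ 2 * #(fractional x) := sum_card_incident_inter_le T (fractional x)
    _ ≤ 2 * #T := by grw [card_fractional_le_card_tightFractional hx]
  exact lt_irrefl _ this

theorem eq_half_of_mem_fractional (hx : x ∈ (degreePolytope ε blossom).extremePoints ℝ) {e : E}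
    (he : e ∈ fractional x) : x e = 1 / 2 := by
  let d : E → ℝ := fun e ↦ if e ∈ fractional x then x e - 1 / 2 else 0
  have hd : d = 0 := by
    refine eq_zero_of_mem_extremePoints_degreePolytope hx
      (fun e he ↦ by_contra fun h ↦ he (if_neg h)) fun v hv ↦ ?_
    simp only [d, sum_ite_mem]
    obtain hempty | hne := (incident ε v ∩ fractional x).eq_empty_or_nonempty
    · simp [hempty]
    · rw [sum_sub_distrib, sum_inter_fractional_eq_one (fun e _ ↦ hx.1.1 e) hv hne, sum_const,
        card_incident_inter_fractional_eq_two hx (mem_tightFractional.2 ⟨hv, hne⟩)]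
      norm_num
  simpa [d, he, sub_eq_zero, -mem_fractional] using congrFun hd e

end DegreePolytope

theorem stmt_5_general {V E : Type*} [Fintype V] [Fintype E] [DecidableEq V]
    (ε : E → V × V)
    (blossom : V → Prop)
    (P : Set (E → ℝ))
    (hP : P = {x | (∀ e, 0 ≤ x e ∧ x e ≤ 1) ∧
      (∀ v, ¬ blossom v → ∑ e, (if (ε e).1 = v ∨ (ε e).2 = v then x e else 0) = 1) ∧
      (∀ v, blossom v → 1 ≤ ∑ e, (if (ε e).1 = v ∨ (ε e).2 = v then x e else 0))}) :
    ∀ x ∈ P.extremePoints ℝ, ∀ e, x e ∈ ({0, 1/2, 1} : Set ℝ) := by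
  classical
  have hP' : P = degreePolytope ε blossom := by
    simp only [hP, degreePolytope, incident, sum_filter]
  intro x hx e
  rw [hP'] at hx
  by_cases he : e ∈ fractional x
  · simp [eq_half_of_mem_fractional hx he]
  · obtain ⟨h0, h1⟩ := hx.1.1 e
    rw [mem_fractional, not_and_or, not_lt, not_lt] at he
    rcases he with he | he
    · simp [le_antisymm he h0]
    · simp [le_antisymm h1 he]

theorem stmt_5 {V E : Type*} [Fintype V] [Fintype E] [DecidableEq V]
    (ε : E → V × V) (hε : ∀ e, (ε e).1 ≠ (ε e).2)
    (blossom : V → Prop)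
    (P : Set (E → ℝ))
    (hP : P = {x | (∀ e, 0 ≤ x e ∧ x e ≤ 1) ∧
      (∀ v, ¬ blossom v → ∑ e, (if (ε e).1 = v ∨ (ε e).2 = v then x e else 0) = 1) ∧
      (∀ v, blossom v → 1 ≤ ∑ e, (if (ε e).1 = v ∨ (ε e).2 = v then x e else 0))}) :
    ∀ x ∈ P.extremePoints ℝ, ∀ e, x e ∈ ({0, 1/2, 1} : Set ℝ) :=
  stmt_5_general ε blossom P hP
end

section
/- For a bipartite graph G, every vertex of the polytope { x ∈ [0,1]^E : Σ_{e∈δ(v)} x_e = 1 for all v ∈ V } is integral; equivalently, the bipartite relaxation of the perfect matching IP is tight for bipartite graphs. -/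
/-!
Let `x` be an extreme point with a fractional coordinate and let `F` be its set of fractional
edges. A vertex met by `F` is met by at least two edges of `F`: its other edges carry `0` or `1`
and the values around it sum to `1`. Double counting then gives `|V(F)| ≤ |F|`. The incidence
matrix of `F` against `V(F)` kills the `±1` vector of the bipartition, so its rank is below
`|V(F)| ≤ |F|` and some nonzero `d` supported on `F` sums to zero at every vertex. For small
`t > 0` both `x + t • d` and `x - t • d` lie in the polytope, contradicting extremality.
-/

open Finset Matrix Filter Topology

theorem Matrix.exists_mulVec_eq_zero_iff_rank_lt {m n K : Type*} [Fintype n] [Field K]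
    (M : Matrix m n K) : (∃ v ≠ 0, M *ᵥ v = 0) ↔ M.rank < Fintype.card n := by
  have h := LinearMap.finrank_range_add_finrank_ker M.mulVecLin
  rw [Module.finrank_fintype_fun_eq_card] at h
  rw [Matrix.rank, ← Nat.sub_pos_iff_lt, ← h, Nat.add_sub_cancel_left, Module.finrank_pos_iff,
    Submodule.nontrivial_iff_ne_bot, Submodule.ne_bot_iff]
  simp only [LinearMap.mem_ker, Matrix.mulVecLin_apply, and_comm]

theorem Matrix.exists_vecMul_eq_zero_of_mulVec_eq_zero {κ ι K : Type*} [Fintype κ] [Fintype ι]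
    [Field K] (A : Matrix κ ι K) {σ : ι → K} (hσ : σ ≠ 0) (hAσ : A *ᵥ σ = 0)
    (hcard : Fintype.card ι ≤ Fintype.card κ) : ∃ d ≠ 0, d ᵥ* A = 0 := by
  have hrank : A.rank < Fintype.card ι := A.exists_mulVec_eq_zero_iff_rank_lt.1 ⟨σ, hσ, hAσ⟩
  simpa only [Matrix.mulVec_transpose] using
    Aᵀ.exists_mulVec_eq_zero_iff_rank_lt.2 (A.rank_transpose ▸ hrank.trans_le hcard)

theorem eq_zero_of_add_mem_of_sub_mem_of_mem_extremePoints {𝕜 M : Type*} [Field 𝕜]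
    [LinearOrder 𝕜] [IsStrictOrderedRing 𝕜] [AddCommGroup M] [Module 𝕜 M] {A : Set M}
    {x y : M} (hx : x ∈ A.extremePoints 𝕜) (hadd : x + y ∈ A) (hsub : x - y ∈ A) : y = 0 :=
  add_eq_left.1 (hx.2 hadd hsub (mem_openSegment_add_sub x y))

namespace BipartiteMatching

variable {V E : Type*} [DecidableEq V] (ε : E → V × V)

theorem card_le_card_of_two_le_card_incident (F : Finset E) (W : Finset V)
    (h : ∀ v ∈ W, 2 ≤ #{e ∈ F | (ε e).1 = v ∨ (ε e).2 = v}) : #W ≤ #F := by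
  have hends (e : E) : #{v ∈ W | (ε e).1 = v ∨ (ε e).2 = v} ≤ 2 := by
    refine (card_le_card (t := {(ε e).1, (ε e).2}) fun v hv => ?_).trans card_le_two
    obtain rfl | rfl := (mem_filter.1 hv).2 <;> simp
  have := card_mul_le_card_mul (fun v e => (ε e).1 = v ∨ (ε e).2 = v) h fun e _ => hends e
  omega

theorem sum_ite_incident {M : Type*} [AddCommMonoid M] (g : V → M) {W : Finset V} {e : E}
    (h₁ : (ε e).1 ∈ W) (h₂ : (ε e).2 ∈ W) (hne : (ε e).1 ≠ (ε e).2) :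
    ∑ v ∈ W, (if (ε e).1 = v ∨ (ε e).2 = v then g v else 0) = g (ε e).1 + g (ε e).2 := by
  rw [← sum_filter, ← sum_pair hne]
  congr 1
  ext v
  simp only [mem_filter, mem_insert, mem_singleton]
  constructor
  · rintro ⟨_, rfl | rfl⟩ <;> simp
  · rintro (rfl | rfl) <;> simp [h₁, h₂]

variable [Fintype E]

def vertexSum (x : E → ℝ) (v : V) : ℝ :=
  ∑ e, if (ε e).1 = v ∨ (ε e).2 = v then x e else 0

def perfectMatchingPolytope : Set (E → ℝ) :=
  {x | (∀ e, 0 ≤ x e ∧ x e ≤ 1) ∧ ∀ v, vertexSum ε x v = 1}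

noncomputable def fractionalEdges (x : E → ℝ) : Finset E :=
  {e | x e ∈ Set.Ioo 0 1}

@[simp]
theorem mem_fractionalEdges {x : E → ℝ} {e : E} :
    e ∈ fractionalEdges x ↔ x e ∈ Set.Ioo 0 1 := by
  simp [fractionalEdges]

theorem mem_fractionalEdges_of_ne {x : E → ℝ} (hx : x ∈ perfectMatchingPolytope ε) {e : E}
    (h₀ : x e ≠ 0) (h₁ : x e ≠ 1) : e ∈ fractionalEdges x :=
  mem_fractionalEdges.2 ⟨(hx.1 e).1.lt_of_ne' h₀, (hx.1 e).2.lt_of_ne h₁⟩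

theorem vertexSum_add_smul (x d : E → ℝ) (t : ℝ) (v : V) :
    vertexSum ε (x + t • d) v = vertexSum ε x v + t * vertexSum ε d v := by
  simp only [vertexSum, mul_sum, ← sum_add_distrib]
  refine sum_congr rfl fun e _ => ?_
  split_ifs <;> simp

theorem two_le_card_fractional_incident {x : E → ℝ} (hx : x ∈ perfectMatchingPolytope ε)
    {v : V} {f : E} (hf : f ∈ fractionalEdges x) (hvf : (ε f).1 = v ∨ (ε f).2 = v) :
    2 ≤ #{e ∈ fractionalEdges x | (ε e).1 = v ∨ (ε e).2 = v} := by
  classical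
  by_contra! hlt
  have hint : ∀ e ≠ f, (ε e).1 = v ∨ (ε e).2 = v → x e = 0 ∨ x e = 1 := by
    intro e hef hve
    by_contra! hmid
    have he : e ∈ {e ∈ fractionalEdges x | (ε e).1 = v ∨ (ε e).2 = v} :=
      mem_filter.2 ⟨mem_fractionalEdges_of_ne ε hx hmid.1 hmid.2, hve⟩
    exact hef (card_le_one.1 (Nat.le_of_lt_succ hlt) e he f (mem_filter.2 ⟨hf, hvf⟩))
  set rest := ∑ e ∈ univ.erase f, if (ε e).1 = v ∨ (ε e).2 = v then x e else 0
  have hsum : x f + rest = 1 := by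
    rw [← hx.2 v, vertexSum, ← add_sum_erase _ _ (mem_univ f), if_pos hvf]
  obtain ⟨hf₀, hf₁⟩ := mem_fractionalEdges.1 hf
  by_cases hone : ∃ e ≠ f, ((ε e).1 = v ∨ (ε e).2 = v) ∧ x e = 1
  · obtain ⟨e, hef, hve, hxe⟩ := hone
    have hnonneg (e : E) : 0 ≤ if (ε e).1 = v ∨ (ε e).2 = v then x e else 0 := by
      split_ifs
      exacts [(hx.1 e).1, le_rfl]
    have : 1 ≤ rest := by
      have h := single_le_sum (fun e _ => hnonneg e) (mem_erase.2 ⟨hef, mem_univ e⟩)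
      rwa [if_pos hve, hxe] at h
    linarith
  · push Not at hone
    have : rest = 0 := sum_eq_zero fun e he => by
      split_ifs with hve
      · exact (hint e (ne_of_mem_erase he) hve).resolve_right (hone e (ne_of_mem_erase he) hve)
      · rfl
    linarith

theorem vertexSum_dite_mem [DecidableEq E] (F : Finset E) (d : F → ℝ) (v : V) :
    vertexSum ε (fun e => if h : e ∈ F then d ⟨e, h⟩ else 0) v =
      ∑ e : F, if (ε e.1).1 = v ∨ (ε e.1).2 = v then d e else 0 := by
  rw [vertexSum, ← sum_subset (subset_univ F) fun e _ he => by simp [he], ← sum_coe_sort F]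
  simp

theorem exists_ne_zero_vertexSum_eq_zero {color : V → Bool}
    (hcolor : ∀ e, color (ε e).1 ≠ color (ε e).2) {F : Finset E} (hF : F.Nonempty)
    (hdeg : ∀ v, ∀ f ∈ F, ((ε f).1 = v ∨ (ε f).2 = v) →
      2 ≤ #{e ∈ F | (ε e).1 = v ∨ (ε e).2 = v}) :
    ∃ d : E → ℝ, d ≠ 0 ∧ (∀ e ∉ F, d e = 0) ∧ ∀ v, vertexSum ε d v = 0 := by
  classical
  set W := F.biUnion fun e => {(ε e).1, (ε e).2}
  have hW {e} (he : e ∈ F) : (ε e).1 ∈ W ∧ (ε e).2 ∈ W := by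
    simp only [W, mem_biUnion, mem_insert, mem_singleton]
    exact ⟨⟨e, he, Or.inl rfl⟩, ⟨e, he, Or.inr rfl⟩⟩
  have hcard : #W ≤ #F := card_le_card_of_two_le_card_incident ε F W fun v hv => by
    obtain ⟨f, hf, hvf⟩ := mem_biUnion.1 hv
    exact hdeg v f hf (by simpa [eq_comm] using hvf)
  let A : Matrix F W ℝ := fun e v => if (ε e.1).1 = v.1 ∨ (ε e.1).2 = v.1 then 1 else 0
  let σ : V → ℝ := fun v => if color v then 1 else -1
  have hσ : (fun v : W => σ v) ≠ 0 := by
    obtain ⟨e, he⟩ := hF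
    intro h
    have := congrFun h ⟨_, (hW he).1⟩
    simp only [σ, Pi.zero_apply] at this
    split_ifs at this <;> norm_num at this
  have hAσ : A *ᵥ (fun v : W => σ v) = 0 := by
    ext e
    simp only [mulVec, dotProduct, A, ite_mul, one_mul, zero_mul, Pi.zero_apply]
    rw [sum_coe_sort W (fun v => if (ε e.1).1 = v ∨ (ε e.1).2 = v then σ v else 0),
      sum_ite_incident ε σ (hW e.2).1 (hW e.2).2 fun h => hcolor e (congrArg color h)]
    have hcol := hcolor e
    simp only [σ]
    revert hcol
    cases color (ε e.1).1 <;> cases color (ε e.1).2 <;> simp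
  obtain ⟨d, hd, hdA⟩ :=
    A.exists_vecMul_eq_zero_of_mulVec_eq_zero hσ hAσ (by simpa using hcard)
  refine ⟨fun e => if h : e ∈ F then d ⟨e, h⟩ else 0, fun h => hd ?_,
    fun e he => dif_neg he, fun v => ?_⟩
  · exact funext fun e => by simpa [e.2] using congrFun h e
  · rw [vertexSum_dite_mem]
    by_cases hv : v ∈ W
    · simpa [vecMul, dotProduct, A, mul_ite] using congrFun hdA ⟨v, hv⟩
    · refine sum_eq_zero fun e _ => if_neg fun hve => hv ?_
      obtain rfl | rfl := hve
      exacts [(hW e.2).1, (hW e.2).2]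

theorem eventually_add_smul_mem_perfectMatchingPolytope {x d : E → ℝ}
    (hx : x ∈ perfectMatchingPolytope ε)
    (hd : ∀ e ∉ fractionalEdges x, d e = 0) (hsum : ∀ v, vertexSum ε d v = 0) :
    ∀ᶠ t in 𝓝 (0 : ℝ), x + t • d ∈ perfectMatchingPolytope ε := by
  have hbox : ∀ e, ∀ᶠ t in 𝓝 (0 : ℝ), x e + t * d e ∈ Set.Icc 0 1 := by
    intro e
    by_cases he : e ∈ fractionalEdges x
    · obtain ⟨h₀, h₁⟩ := mem_fractionalEdges.1 he
      have hcont : Tendsto (fun t : ℝ => x e + t * d e) (𝓝 0) (𝓝 (x e)) :=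
        ((continuous_mul_const (d e)).const_add (x e)).tendsto' 0 (x e) (by simp)
      exact (hcont.eventually (Ioo_mem_nhds h₀ h₁)).mono fun _ h => Set.Ioo_subset_Icc_self h
    · exact Eventually.of_forall fun t => by simpa [hd e he] using hx.1 e
  filter_upwards [eventually_all.2 hbox] with t ht
  exact ⟨ht, fun v => by rw [vertexSum_add_smul, hx.2 v, hsum v, mul_zero, add_zero]⟩

theorem eq_zero_of_mem_extremePoints_perfectMatchingPolytope {x d : E → ℝ}
    (hx : x ∈ (perfectMatchingPolytope ε).extremePoints ℝ)
    (hd : ∀ e ∉ fractionalEdges x, d e = 0) (hsum : ∀ v, vertexSum ε d v = 0) : d = 0 := by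
  have h := eventually_add_smul_mem_perfectMatchingPolytope ε hx.1 hd hsum
  have hneg := (continuous_neg.tendsto' (0 : ℝ) 0 neg_zero).eventually h
  obtain ⟨t, ⟨hadd, hsub⟩, ht⟩ := ((h.and hneg).filter_mono nhdsWithin_le_nhds |>.and
    (self_mem_nhdsWithin (s := Set.Ioi 0))).exists
  rw [neg_smul, ← sub_eq_add_neg] at hsub
  have htd := eq_zero_of_add_mem_of_sub_mem_of_mem_extremePoints hx hadd hsub
  exact (smul_eq_zero.1 htd).resolve_left ht.ne'

end BipartiteMatching

open BipartiteMatching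

theorem stmt_9_general {V E : Type*} [Fintype E] [DecidableEq V]
    (ε : E → V × V)
    (hbip : ∃ color : V → Bool, ∀ e, color (ε e).1 ≠ color (ε e).2)
    (P : Set (E → ℝ))
    (hP : P = {x | (∀ e, 0 ≤ x e ∧ x e ≤ 1) ∧
      ∀ v, ∑ e, (if (ε e).1 = v ∨ (ε e).2 = v then x e else 0) = 1}) :
    ∀ x ∈ P.extremePoints ℝ, ∀ e, x e ∈ ({0, 1} : Set ℝ) := by
  obtain ⟨color, hcolor⟩ := hbip
  subst hP
  intro x hx e₀
  by_contra he₀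
  simp only [Set.mem_insert_iff, Set.mem_singleton_iff, not_or] at he₀
  obtain ⟨d, hd, hdF, hdsum⟩ := exists_ne_zero_vertexSum_eq_zero ε hcolor
    ⟨e₀, mem_fractionalEdges_of_ne ε hx.1 he₀.1 he₀.2⟩
    fun v f hf hvf => two_le_card_fractional_incident ε hx.1 hf hvf
  exact hd (eq_zero_of_mem_extremePoints_perfectMatchingPolytope ε hx hdF hdsum)

theorem stmt_9 {V E : Type*} [Fintype V] [Fintype E] [DecidableEq V]
    (ε : E → V × V) (hε : ∀ e, (ε e).1 ≠ (ε e).2)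
    (hbip : ∃ color : V → Bool, ∀ e, color (ε e).1 ≠ color (ε e).2)
    (P : Set (E → ℝ))
    (hP : P = {x | (∀ e, 0 ≤ x e ∧ x e ≤ 1) ∧
      ∀ v, ∑ e, (if (ε e).1 = v ∨ (ε e).2 = v then x e else 0) = 1}) :
    ∀ x ∈ P.extremePoints ℝ, ∀ e, x e ∈ ({0, 1} : Set ℝ) :=
  stmt_9_general ε hbip P hP
end

section
/- Let G=(V,E) be a finite graph, S ⊆ V a set of vertices of odd size such that the induced odd cycle structure allows near-perfect matchings (namely, for every u ∈ S there is a matching of G[S] covering S∖{u}). Let G† be the graph obtained by contracting S to a single vertex v(S). If M† is a perfect matching of G†, then M† (lifted back to G) can be extended by a matching within S to a perfect matching of G. -/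
/-!
Let `e₀ = s(w, u)` be the unique edge of `M` meeting `S`, with `w ∉ S` and `u ∈ S`, and take a
near-perfect matching `MS` of `G[S]` missing `u`. Every vertex is then covered exactly once by
`M ∪ MS`: a vertex outside `S`, and `u` itself, only by `M`; a vertex of `S` other than `u` only
by `MS`, since `u` is the only vertex of `S` that `M` touches.
-/

theorem Sym2.eq_of_mem_of_mem_of_notMem {α : Type*} {s : Set α} {e : Sym2 α} {w x y : α}
    (hw : w ∈ e) (hws : w ∉ s) (hx : x ∈ e) (hxs : x ∈ s) (hy : y ∈ e) (hys : y ∈ s) :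
    x = y := by
  induction e using Sym2.ind with
  | _ a b =>
    simp only [Sym2.mem_iff] at hw hx hy
    grind

theorem Finset.existsUnique_mem_union_left {α : Type*} [DecidableEq α] {M N : Finset α}
    {p : α → Prop} (hM : ∃! e, e ∈ M ∧ p e) (hN : ∀ e ∈ N, ¬ p e) :
    ∃! e, e ∈ M ∪ N ∧ p e := by
  obtain ⟨e, ⟨heM, hpe⟩, huniq⟩ := hM
  refine ⟨e, ⟨mem_union_left N heM, hpe⟩, fun e' ⟨he', hpe'⟩ => ?_⟩
  rcases mem_union.mp he' with he'M | he'N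
  · exact huniq e' ⟨he'M, hpe'⟩
  · exact absurd hpe' (hN e' he'N)

theorem Finset.existsUnique_mem_union_right {α : Type*} [DecidableEq α] {M N : Finset α}
    {p : α → Prop} (hN : ∃! e, e ∈ N ∧ p e) (hM : ∀ e ∈ M, ¬ p e) :
    ∃! e, e ∈ M ∪ N ∧ p e := by
  rw [union_comm]
  exact existsUnique_mem_union_left hN hM

theorem stmt_12_general {V : Type*} [DecidableEq V] (G : SimpleGraph V) (S : Finset V)
    (hfc : ∀ u ∈ S, ∃ MS : Finset (Sym2 V),
      (∀ e ∈ MS, e ∈ G.edgeSet ∧ ∀ x ∈ e, x ∈ S ∧ x ≠ u) ∧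
      (∀ x ∈ S, x ≠ u → ∃! e, e ∈ MS ∧ x ∈ e))
    (M : Finset (Sym2 V))
    (hMout : ∀ e ∈ M, ∃ x ∈ e, x ∉ S)
    (hMcov : ∀ v : V, v ∉ S → ∃! e, e ∈ M ∧ v ∈ e)
    (hMS : ∃! e, e ∈ M ∧ ∃ x ∈ e, x ∈ S) :
    ∃ MS : Finset (Sym2 V),
      (∀ e ∈ MS, e ∈ G.edgeSet ∧ ∀ x ∈ e, x ∈ S) ∧
      ∀ v : V, ∃! e, e ∈ M ∪ MS ∧ v ∈ e := by
  obtain ⟨e₀, ⟨he₀M, u, hue₀, huS⟩, he₀uniq⟩ := hMS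
  obtain ⟨MS, hMSedge, hMScov⟩ := hfc u huS
  have hM_meets_S : ∀ e ∈ M, ∀ x ∈ e, x ∈ S → x = u := by
    intro e he x hxe hxS
    obtain rfl := he₀uniq e ⟨he, x, hxe, hxS⟩
    obtain ⟨w, hwe, hwS⟩ := hMout e he
    exact Sym2.eq_of_mem_of_mem_of_notMem (s := ↑S) hwe hwS hxe hxS hue₀ huS
  refine ⟨MS, fun e he => ⟨(hMSedge e he).1, fun x hx => ((hMSedge e he).2 x hx).1⟩, fun v => ?_⟩
  by_cases hvS : v ∈ S
  · by_cases hvu : v = u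
    · subst hvu
      exact Finset.existsUnique_mem_union_left
        ⟨e₀, ⟨he₀M, hue₀⟩, fun e ⟨he, hve⟩ => he₀uniq e ⟨he, v, hve, hvS⟩⟩
        fun e he hve => ((hMSedge e he).2 v hve).2 rfl
    · exact Finset.existsUnique_mem_union_right (hMScov v hvS hvu)
        fun e he hve => hvu (hM_meets_S e he v hve hvS)
  · exact Finset.existsUnique_mem_union_left (hMcov v hvS)
      fun e he hve => hvS ((hMSedge e he).2 v hve).1

theorem stmt_12 {V : Type*} [DecidableEq V] (G : SimpleGraph V) (S : Finset V)
    (hodd : Odd S.card)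
    (hfc : ∀ u ∈ S, ∃ MS : Finset (Sym2 V),
      (∀ e ∈ MS, e ∈ G.edgeSet ∧ ∀ x ∈ e, x ∈ S ∧ x ≠ u) ∧
      (∀ x ∈ S, x ≠ u → ∃! e, e ∈ MS ∧ x ∈ e))
    (M : Finset (Sym2 V))
    (hMG : ∀ e ∈ M, e ∈ G.edgeSet)
    (hMout : ∀ e ∈ M, ∃ x ∈ e, x ∉ S)
    (hMcov : ∀ v : V, v ∉ S → ∃! e, e ∈ M ∧ v ∈ e)
    (hMS : ∃! e, e ∈ M ∧ ∃ x ∈ e, x ∈ S) :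
    ∃ MS : Finset (Sym2 V),
      (∀ e ∈ MS, e ∈ G.edgeSet ∧ ∀ x ∈ e, x ∈ S) ∧
      ∀ v : V, ∃! e, e ∈ M ∪ MS ∧ v ∈ e :=
  stmt_12_general G S hfc M hMout hMcov hMS
end
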